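/- Sparsity bound for symmetric Boolean functions: let f : {0,1}^n → {0,1} be symmetric with representation f(x) = ⊕_{i=0}^n c_i · C^i(x), c_i ∈ {0,1}. Suppose that for every r with 2^r ≤ n we are given an integer-valued function p_r : {0,1}^n → ℤ with p_r(x) ≡ C^{2^r}(x) (mod 2) for all x, and with sparsity s_r. Then there exists g : {0,1}^n → ℤ with g(x) ≡ f(x) (mod 2) for all x, whose sparsity is at most Σ_{i=0}^n c_i · ∏_{r∈R_i} (s_r + 1) (the empty product equals 1). -/

import Mathlib

open scoped BigOperators

/-- The parity `χ_S(x) = ⊕_{i ∈ S} x_i ∈ {0,1}`. -/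
def chi {n : ℕ} (S : Finset (Fin n)) (x : Fin n → Bool) : ℕ :=
  (∑ i ∈ S, if x i then 1 else 0) % 2

/-- The Fourier coefficient `ĝ(S) = 2^{-n} Σ_x g(x) (-1)^{χ_S(x)}`. -/
noncomputable def fourierCoef {n : ℕ} (g : (Fin n → Bool) → ℝ) (S : Finset (Fin n)) : ℝ :=
  (2 ^ n : ℝ)⁻¹ * ∑ x : Fin n → Bool, g x * (-1 : ℝ) ^ chi S x

open Classical in
/-- The sparsity of `g`: the number of nonempty sets `S` with `ĝ(S) ≠ 0`. -/
noncomputable def sparsity {n : ℕ} (g : (Fin n → Bool) → ℝ) : ℕ :=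
  ((Finset.univ : Finset (Finset (Fin n))).filter
    fun S => S.Nonempty ∧ fourierCoef g S ≠ 0).card

/-- The complete symmetric function `C^k(x)`: the parity of the number of `k`-element
subsets of the support of `x` (`C^0` is the constant 1 function). -/
def Csf {n : ℕ} (k : ℕ) (x : Fin n → Bool) : Bool :=
  decide (Odd ((Finset.univ.filter fun i => x i = true).powersetCard k).card)

/-- `R_i`: the set of binary digit positions of `i` (so `i = Σ_{r ∈ R_i} 2^r`, `R_0 = ∅`). -/
def Rset (i : ℕ) : Finset ℕ :=
  (Finset.range (i + 1)).filter fun r => i.testBit r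

lemma odd_choose (k : ℕ) : ∀ m : ℕ, Odd (m.choose k) ↔
    ∀ r, k.testBit r = true → m.testBit r = true := by
  induction k using Nat.strong_induction_on with
  | _ k ih =>
    intro m
    rcases Nat.eq_zero_or_pos k with h0 | hk
    · subst h0; simp
    · haveI : Fact (Nat.Prime 2) := ⟨Nat.prime_two⟩
      have key : m.choose k ≡ (m % 2).choose (k % 2) * (m / 2).choose (k / 2) [MOD 2] :=
        Choose.choose_modEq_choose_mod_mul_choose_div_nat
      have h1 : Odd (m.choose k) ↔
          Odd ((m % 2).choose (k % 2)) ∧ Odd ((m / 2).choose (k / 2)) := by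
        rw [Nat.odd_iff, key, ← Nat.odd_iff, Nat.odd_mul]
      have h2 := ih (k / 2) (Nat.div_lt_self hk one_lt_two) (m / 2)
      rw [h1, h2]
      constructor
      · rintro ⟨hA, hB⟩ r hr
        cases r with
        | zero =>
          rw [Nat.testBit_zero] at hr ⊢
          simp only [decide_eq_true_eq] at hr ⊢
          rcases Nat.mod_two_eq_zero_or_one m with h | h
          · rw [hr, h] at hA; exact absurd hA (by decide)
          · exact h
        | succ r =>
          rw [Nat.testBit_succ] at hr ⊢
          exact hB r hr
      · intro h
        constructor
        · rcases Nat.mod_two_eq_zero_or_one k with hk2 | hk2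
          · rw [hk2]; simp
          · have hm : m % 2 = 1 := by
              have := h 0 (by rw [Nat.testBit_zero]; simp [hk2])
              rw [Nat.testBit_zero] at this; simpa using this
            rw [hk2, hm]; decide
        · intro r hr
          rw [Nat.testBit_div_two] at hr ⊢
          exact h (r + 1) hr

open Finset

variable {n : ℕ}

def eps {n : ℕ} (x : Fin n → Bool) (i : Fin n) : ℝ := if x i then -1 else 1

lemma eps_sq (x : Fin n → Bool) (i : Fin n) : eps x i * eps x i = 1 := by
  unfold eps; by_cases h : x i <;> simp [h]

lemma chiR_eq (S : Finset (Fin n)) (x : Fin n → Bool) :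
    (-1 : ℝ) ^ chi S x = ∏ i ∈ S, eps x i := by
  unfold chi
  have h1 : (-1 : ℝ) ^ ((∑ i ∈ S, if x i then 1 else 0) % 2)
      = (-1 : ℝ) ^ (∑ i ∈ S, if x i then 1 else 0) := by
    conv_rhs => rw [← Nat.mod_add_div (∑ i ∈ S, if x i then 1 else 0) 2]
    rw [pow_add, pow_mul]
    norm_num
  rw [h1, ← Finset.prod_pow_eq_pow_sum]
  refine Finset.prod_congr rfl fun i _ => ?_
  unfold eps; by_cases h : x i <;> simp [h]

lemma chiR_mul (S T : Finset (Fin n)) (x : Fin n → Bool) :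
    (-1 : ℝ) ^ chi S x * (-1 : ℝ) ^ chi T x = (-1 : ℝ) ^ chi (symmDiff S T) x := by
  rw [chiR_eq, chiR_eq, chiR_eq]
  rw [← Finset.prod_union_inter]
  have hu : S ∪ T = (symmDiff S T) ∪ (S ∩ T) := by
    ext i; simp [Finset.mem_symmDiff]; tauto
  have hd : Disjoint (symmDiff S T) (S ∩ T) := by
    rw [Finset.disjoint_left]; intro a ha hb
    simp [Finset.mem_symmDiff] at ha hb; tauto
  rw [hu, Finset.prod_union hd, mul_assoc, ← Finset.prod_mul_distrib,
    Finset.prod_congr rfl (fun i _ => eps_sq x i), Finset.prod_const_one, mul_one]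

lemma sum_chiR_eq_zero {S : Finset (Fin n)} (hS : S.Nonempty) :
    ∑ x : Fin n → Bool, (-1 : ℝ) ^ chi S x = 0 := by
  obtain ⟨i0, hi0⟩ := hS
  refine Finset.sum_involution (fun x _ => Function.update x i0 (!x i0)) ?_ ?_
    (fun x _ => Finset.mem_univ _) ?_
  · intro x _
    rw [chiR_eq, chiR_eq]
    rw [← Finset.mul_prod_erase S _ hi0, ← Finset.mul_prod_erase S _ hi0]
    have h1 : ∏ j ∈ S.erase i0, eps (Function.update x i0 (!x i0)) j
        = ∏ j ∈ S.erase i0, eps x j := by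
      refine Finset.prod_congr rfl fun j hj => ?_
      have : j ≠ i0 := Finset.ne_of_mem_erase hj
      unfold eps; rw [Function.update_of_ne this]
    have h2 : eps (Function.update x i0 (!x i0)) i0 = - eps x i0 := by
      unfold eps; rw [Function.update_self]; by_cases h : x i0 <;> simp [h]
    rw [h1, h2]; ring
  · intro x _ _ hcon
    have := congrFun hcon i0
    simp at this
  · intro x _
    funext j
    rcases eq_or_ne j i0 with rfl | h
    · simp
    · simp [Function.update_of_ne h]

lemma sum_chiR (S : Finset (Fin n)) :
    ∑ x : Fin n → Bool, (-1 : ℝ) ^ chi S x = if S = ∅ then (2 : ℝ) ^ n else 0 := by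
  rcases eq_or_ne S ∅ with rfl | h
  · simp [chi, Finset.card_univ]
  · rw [if_neg h]
    exact sum_chiR_eq_zero (Finset.nonempty_iff_ne_empty.mpr h)

lemma fourierCoef_chiR (S U : Finset (Fin n)) :
    fourierCoef (fun x => (-1 : ℝ) ^ chi S x) U = if U = S then 1 else 0 := by
  unfold fourierCoef
  have : ∀ x : Fin n → Bool, (-1 : ℝ) ^ chi S x * (-1 : ℝ) ^ chi U x
      = (-1 : ℝ) ^ chi (symmDiff S U) x := chiR_mul S U
  rw [Finset.sum_congr rfl fun x _ => this x, sum_chiR]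
  rcases eq_or_ne U S with rfl | h
  · rw [if_pos (symmDiff_self U ▸ rfl), if_pos rfl]
    field_simp
  · have hne : symmDiff S U ≠ ∅ :=
      (Finset.symmDiff_nonempty.mpr fun hc => h hc.symm).ne_empty

    rw [if_neg hne, if_neg h, mul_zero]

lemma sum_chi_pair (x y : Fin n → Bool) :
    ∑ S : Finset (Fin n), (-1:ℝ) ^ chi S y * (-1:ℝ) ^ chi S x
      = if y = x then (2:ℝ) ^ n else 0 := by
  have h1 : ∀ S : Finset (Fin n), (-1:ℝ) ^ chi S y * (-1:ℝ) ^ chi S x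
      = ∏ i ∈ S, (eps y i * eps x i) := by
    intro S; rw [chiR_eq, chiR_eq, Finset.prod_mul_distrib]
  simp only [h1]
  have h2 : ∑ S ∈ (Finset.univ : Finset (Fin n)).powerset, ∏ i ∈ S, (eps y i * eps x i)
      = ∏ i : Fin n, (eps y i * eps x i + 1) := by
    rw [Finset.prod_add]
    exact Finset.sum_congr rfl fun t _ => by simp
  rw [← Finset.powerset_univ, h2]
  rcases eq_or_ne y x with rfl | hne
  · rw [if_pos rfl]
    have : ∀ i : Fin n, eps y i * eps y i + 1 = 2 := fun i => by rw [eps_sq]; norm_num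
    simp only [this]
    simp [Finset.card_univ]
  · rw [if_neg hne]
    obtain ⟨i, hi⟩ : ∃ i, y i ≠ x i := by
      by_contra hc
      push_neg at hc
      exact hne (funext hc)
    apply Finset.prod_eq_zero (Finset.mem_univ i)
    unfold eps
    rcases Bool.eq_false_or_eq_true (y i) with h | h <;>
      rcases Bool.eq_false_or_eq_true (x i) with h' | h' <;>
        simp [h, h'] at hi ⊢

lemma inversion (g : (Fin n → Bool) → ℝ) (x : Fin n → Bool) :
    g x = ∑ S : Finset (Fin n), fourierCoef g S * (-1:ℝ) ^ chi S x := by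
  symm
  unfold fourierCoef
  calc ∑ S : Finset (Fin n),
        ((2 ^ n : ℝ)⁻¹ * ∑ y : Fin n → Bool, g y * (-1:ℝ) ^ chi S y) * (-1:ℝ) ^ chi S x
      = ∑ S : Finset (Fin n), ∑ y : Fin n → Bool,
          (2 ^ n : ℝ)⁻¹ * (g y * ((-1:ℝ) ^ chi S y * (-1:ℝ) ^ chi S x)) := by
        refine Finset.sum_congr rfl fun S _ => ?_
        rw [Finset.mul_sum, Finset.sum_mul]
        exact Finset.sum_congr rfl fun y _ => by ring
    _ = ∑ y : Fin n → Bool, ∑ S : Finset (Fin n),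
          (2 ^ n : ℝ)⁻¹ * (g y * ((-1:ℝ) ^ chi S y * (-1:ℝ) ^ chi S x)) := Finset.sum_comm
    _ = ∑ y : Fin n → Bool,
          (2 ^ n : ℝ)⁻¹ * (g y * ∑ S : Finset (Fin n), (-1:ℝ) ^ chi S y * (-1:ℝ) ^ chi S x) := by
        simp only [← Finset.mul_sum]
    _ = g x := by
        simp only [sum_chi_pair]
        rw [Finset.sum_eq_single x]
        · rw [if_pos rfl]
          field_simp
        · intro y _ hy
          rw [if_neg hy]
          simp
        · intro hx
          exact absurd (Finset.mem_univ x) hx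

open Classical in
noncomputable def fsupp {n : ℕ} (g : (Fin n → Bool) → ℝ) : Finset (Finset (Fin n)) :=
  Finset.univ.filter fun S => fourierCoef g S ≠ 0

lemma mem_fsupp {g : (Fin n → Bool) → ℝ} {S : Finset (Fin n)} :
    S ∈ fsupp g ↔ fourierCoef g S ≠ 0 := by
  classical
  simp [fsupp]

lemma inversion' (g : (Fin n → Bool) → ℝ) (x : Fin n → Bool) :
    g x = ∑ S ∈ fsupp g, fourierCoef g S * (-1:ℝ) ^ chi S x := by
  rw [inversion g x]
  symm
  apply Finset.sum_subset (Finset.subset_univ _)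
  intro S _ hS
  have : fourierCoef g S = 0 := by
    by_contra hc
    exact hS (mem_fsupp.mpr hc)
  rw [this, zero_mul]

lemma fourierCoef_sum {ι : Type*} (t : Finset ι) (F : ι → (Fin n → Bool) → ℝ)
    (U : Finset (Fin n)) :
    fourierCoef (fun x => ∑ j ∈ t, F j x) U = ∑ j ∈ t, fourierCoef (F j) U := by
  unfold fourierCoef
  calc (2 ^ n : ℝ)⁻¹ * ∑ x : Fin n → Bool, (∑ j ∈ t, F j x) * (-1:ℝ) ^ chi U x
      = (2 ^ n : ℝ)⁻¹ * ∑ x : Fin n → Bool, ∑ j ∈ t, F j x * (-1:ℝ) ^ chi U x := by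
        simp only [Finset.sum_mul]
    _ = (2 ^ n : ℝ)⁻¹ * ∑ j ∈ t, ∑ x : Fin n → Bool, F j x * (-1:ℝ) ^ chi U x := by
        rw [Finset.sum_comm]
    _ = ∑ j ∈ t, (2 ^ n : ℝ)⁻¹ * ∑ x : Fin n → Bool, F j x * (-1:ℝ) ^ chi U x :=
        Finset.mul_sum _ _ _

lemma fourierCoef_smul (a : ℝ) (g : (Fin n → Bool) → ℝ) (U : Finset (Fin n)) :
    fourierCoef (fun x => a * g x) U = a * fourierCoef g U := by
  unfold fourierCoef
  simp only [Finset.mul_sum]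
  exact Finset.sum_congr rfl fun x _ => by ring

lemma fsupp_mul (g h : (Fin n → Bool) → ℝ) :
    fsupp (fun x => g x * h x) ⊆
      Finset.image (fun q : Finset (Fin n) × Finset (Fin n) => symmDiff q.1 q.2)
        (fsupp g ×ˢ fsupp h) := by
  intro U hU
  have hgh : (fun x => g x * h x) = fun x => ∑ S ∈ fsupp g, ∑ T ∈ fsupp h,
      (fourierCoef g S * fourierCoef h T) * (-1:ℝ) ^ chi (symmDiff S T) x := by
    funext x
    rw [inversion' g x, inversion' h x, Finset.sum_mul_sum]
    refine Finset.sum_congr rfl fun S _ => Finset.sum_congr rfl fun T _ => ?_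
    rw [← chiR_mul]
    ring
  have hcoef : fourierCoef (fun x => g x * h x) U
      = ∑ S ∈ fsupp g, ∑ T ∈ fsupp h,
        (fourierCoef g S * fourierCoef h T) * (if U = symmDiff S T then 1 else 0) := by
    rw [hgh, fourierCoef_sum]
    refine Finset.sum_congr rfl fun S _ => ?_
    rw [fourierCoef_sum]
    refine Finset.sum_congr rfl fun T _ => ?_
    rw [fourierCoef_smul, fourierCoef_chiR]
  by_contra hmem
  have hzero : fourierCoef (fun x => g x * h x) U = 0 := by
    rw [hcoef]
    refine Finset.sum_eq_zero fun S hS => Finset.sum_eq_zero fun T hT => ?_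
    have : U ≠ symmDiff S T := by
      intro hc
      exact hmem (Finset.mem_image.mpr ⟨(S, T), Finset.mem_product.mpr ⟨hS, hT⟩, hc.symm⟩)
    rw [if_neg this, mul_zero]
  exact (mem_fsupp.mp hU) hzero

lemma fsupp_one : fsupp (fun _ : Fin n → Bool => (1:ℝ)) ⊆ {∅} := by
  intro U hU
  have h1 : (fun _ : Fin n → Bool => (1:ℝ)) = fun x => (-1:ℝ) ^ chi (∅ : Finset (Fin n)) x := by
    funext x; simp [chi]
  have := mem_fsupp.mp hU
  rw [h1, fourierCoef_chiR] at this
  rcases eq_or_ne U ∅ with rfl | hne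
  · exact Finset.mem_singleton_self _
  · rw [if_neg hne] at this; exact absurd rfl this

lemma fsupp_prod {ι : Type*} [DecidableEq ι] (t : Finset ι) (P : ι → (Fin n → Bool) → ℝ) :
    (fsupp (fun x => ∏ r ∈ t, P r x)).card ≤ ∏ r ∈ t, (fsupp (P r)).card := by
  induction t using Finset.cons_induction with
  | empty =>
    simpa using Finset.card_le_card fsupp_one
  | cons a t ha ih =>
    simp only [Finset.prod_cons]
    calc (fsupp fun x => P a x * ∏ r ∈ t, P r x).card
        ≤ (Finset.image (fun q : Finset (Fin n) × Finset (Fin n) => symmDiff q.1 q.2)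
            (fsupp (P a) ×ˢ fsupp (fun x => ∏ r ∈ t, P r x))).card :=
          Finset.card_le_card (fsupp_mul _ _)
      _ ≤ (fsupp (P a) ×ˢ fsupp (fun x => ∏ r ∈ t, P r x)).card := Finset.card_image_le
      _ = (fsupp (P a)).card * (fsupp (fun x => ∏ r ∈ t, P r x)).card := Finset.card_product _ _
      _ ≤ (fsupp (P a)).card * ∏ r ∈ t, (fsupp (P r)).card := Nat.mul_le_mul_left _ ih

lemma fsupp_sum {ι : Type*} [DecidableEq ι] (t : Finset ι) (F : ι → (Fin n → Bool) → ℝ) :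
    fsupp (fun x => ∑ j ∈ t, F j x) ⊆ t.biUnion fun j => fsupp (F j) := by
  intro U hU
  by_contra hmem
  refine (mem_fsupp.mp hU) ?_
  rw [fourierCoef_sum]
  refine Finset.sum_eq_zero fun j hj => ?_
  by_contra hc
  exact hmem (Finset.mem_biUnion.mpr ⟨j, hj, mem_fsupp.mpr hc⟩)

def wt {n : ℕ} (x : Fin n → Bool) : ℕ := (Finset.univ.filter fun i => x i = true).card

lemma Csf_iff {n : ℕ} (k : ℕ) (x : Fin n → Bool) :
    Csf k x = true ↔ ∀ r, k.testBit r = true → (wt x).testBit r = true := by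
  unfold Csf
  rw [decide_eq_true_eq, Finset.card_powersetCard]
  exact odd_choose k (wt x)

lemma Csf_pow {n : ℕ} (r : ℕ) (x : Fin n → Bool) :
    Csf (2 ^ r) x = true ↔ (wt x).testBit r = true := by
  rw [Csf_iff]
  constructor
  · intro h
    exact h r Nat.testBit_two_pow_self
  · intro h r' hr'
    have : r = r' := by
      have := Nat.testBit_two_pow (n := r) (m := r')
      rw [hr'] at this
      exact of_decide_eq_true this.symm
    exact this ▸ h

lemma mem_Rset {i r : ℕ} : r ∈ Rset i ↔ i.testBit r = true := by
  unfold Rset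
  rw [Finset.mem_filter, Finset.mem_range]
  constructor
  · exact fun h => h.2
  · intro h
    refine ⟨?_, h⟩
    have h1 : 2 ^ r ≤ i := Nat.ge_two_pow_of_testBit h
    have h2 : r < 2 ^ r := Nat.lt_two_pow_self
    omega

lemma ind_Csf_prod {n : ℕ} (i : ℕ) (x : Fin n → Bool) :
    (if Csf i x then (1 : ZMod 2) else 0)
      = ∏ r ∈ Rset i, (if Csf (2 ^ r) x then (1 : ZMod 2) else 0) := by
  by_cases h : Csf i x = true
  · rw [if_pos h]
    symm
    refine Finset.prod_eq_one fun r hr => ?_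
    rw [if_pos (Csf_pow r x |>.mpr ((Csf_iff i x).mp h r (mem_Rset.mp hr)))]
  · rw [if_neg h]
    have hne : ¬ ∀ r, i.testBit r = true → (wt x).testBit r = true :=
      fun hc => h ((Csf_iff i x).mpr hc)
    push_neg at hne
    obtain ⟨r, hr1, hr2⟩ := hne
    symm
    refine Finset.prod_eq_zero (mem_Rset.mpr hr1) ?_
    rw [if_neg]
    intro hc
    exact hr2 ((Csf_pow r x).mp hc)

lemma sparsity_le_card_fsupp {n : ℕ} (P : (Fin n → Bool) → ℝ) :
    sparsity P ≤ (fsupp P).card := by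
  unfold sparsity
  apply Finset.card_le_card
  intro S hS
  rw [Finset.mem_filter] at hS
  exact mem_fsupp.mpr hS.2.2

lemma card_fsupp_le {n : ℕ} (P : (Fin n → Bool) → ℝ) :
    (fsupp P).card ≤ sparsity P + 1 := by
  unfold sparsity
  have hsub : fsupp P ⊆ insert ∅ ((Finset.univ : Finset (Finset (Fin n))).filter
      fun S => S.Nonempty ∧ fourierCoef P S ≠ 0) := by
    intro S hS
    rcases eq_or_ne S ∅ with rfl | h
    · exact Finset.mem_insert_self _ _
    · exact Finset.mem_insert_of_mem (Finset.mem_filter.mpr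
        ⟨Finset.mem_univ _, Finset.nonempty_iff_ne_empty.mpr h, mem_fsupp.mp hS⟩)
  exact le_trans (Finset.card_le_card hsub) (Finset.card_insert_le _ _)

lemma fsupp_const_zero {n : ℕ} : fsupp (fun _ : Fin n → Bool => (0:ℝ)) = ∅ := by
  ext S
  simp only [mem_fsupp, Finset.notMem_empty, iff_false, not_not]
  unfold fourierCoef
  simp

lemma dvd_iff_cast {a b : ℤ} : (2 : ℤ) ∣ a - b ↔ ((a : ZMod 2) = (b : ZMod 2)) := by
  constructor
  · intro h
    have : ((a - b : ℤ) : ZMod 2) = 0 := by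
      rw [ZMod.intCast_zmod_eq_zero_iff_dvd]
      exact_mod_cast h
    push_cast at this
    linear_combination this
  · intro h
    have : ((a - b : ℤ) : ZMod 2) = 0 := by push_cast; rw [h]; ring
    have := (ZMod.intCast_zmod_eq_zero_iff_dvd _ 2).mp this
    exact_mod_cast this

/-- Sparsity bound for symmetric Boolean functions: if `f = ⊕_{i=0}^n c_i C^i` and each
`C^{2^r}` (for `2^r ≤ n`) admits an integer-valued polynomial `p_r ≡ C^{2^r} (mod 2)`
of sparsity `s_r`, then `f` admits an integer-valued `g ≡ f (mod 2)` whose sparsity is at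
most `Σ_{i=0}^n c_i ∏_{r ∈ R_i} (s_r + 1)`. -/
theorem symmetric_sparsity_bound (n : ℕ) (f : (Fin n → Bool) → Bool) (c : ℕ → Bool)
    (hrep : ∀ x : Fin n → Bool,
      (2 : ℤ) ∣ (∑ i ∈ Finset.range (n + 1),
          (if c i then 1 else 0) * (if Csf i x then 1 else 0))
        - (if f x then 1 else 0))
    (p : ℕ → (Fin n → Bool) → ℤ) (s : ℕ → ℕ)
    (hp : ∀ r : ℕ, 2 ^ r ≤ n → ∀ x : Fin n → Bool,
      (2 : ℤ) ∣ p r x - (if Csf (2 ^ r) x then 1 else 0))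
    (hs : ∀ r : ℕ, 2 ^ r ≤ n → sparsity (fun x => (p r x : ℝ)) = s r) :
    ∃ g : (Fin n → Bool) → ℤ,
      (∀ x : Fin n → Bool, (2 : ℤ) ∣ g x - (if f x then 1 else 0)) ∧
      sparsity (fun x => (g x : ℝ)) ≤
        ∑ i ∈ Finset.range (n + 1),
          (if c i then 1 else 0) * ∏ r ∈ Rset i, (s r + 1) := by
  classical
  -- for r ∈ Rset i with i ≤ n we have 2^r ≤ n
  have hle : ∀ i ∈ Finset.range (n + 1), ∀ r ∈ Rset i, 2 ^ r ≤ n := by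
    intro i hi r hr
    have h1 : 2 ^ r ≤ i := Nat.ge_two_pow_of_testBit (mem_Rset.mp hr)
    have h2 : i < n + 1 := Finset.mem_range.mp hi
    omega
  refine ⟨fun x => ∑ i ∈ Finset.range (n + 1),
      (if c i then (1:ℤ) else 0) * ∏ r ∈ Rset i, p r x, ?_, ?_⟩
  · intro x
    rw [dvd_iff_cast]
    have hrepx := dvd_iff_cast.mp (hrep x)
    rw [← hrepx]
    push_cast
    refine Finset.sum_congr rfl fun i hi => ?_
    rcases Bool.eq_false_or_eq_true (c i) with hci | hci
    · simp only [hci, if_true, one_mul]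
      rw [show ((if Csf i x = true then (1:ZMod 2) else 0)
          = ∏ r ∈ Rset i, (if Csf (2 ^ r) x then (1 : ZMod 2) else 0)) from ind_Csf_prod i x]
      refine Finset.prod_congr rfl fun r hr => ?_
      have hpr := dvd_iff_cast.mp (hp r (hle i hi r hr) x)
      rw [hpr]
      by_cases h : Csf (2 ^ r) x <;> simp [h]
    · simp [hci]
  · have hGeq : (fun x => ((∑ i ∈ Finset.range (n + 1),
        (if c i then (1:ℤ) else 0) * ∏ r ∈ Rset i, p r x : ℤ) : ℝ))
        = fun x => ∑ i ∈ Finset.range (n + 1),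
            (if c i then (1:ℝ) else 0) * ∏ r ∈ Rset i, ((p r x : ℤ) : ℝ) := by
      funext x
      push_cast
      rfl
    rw [hGeq]
    calc sparsity (fun x => ∑ i ∈ Finset.range (n + 1),
            (if c i then (1:ℝ) else 0) * ∏ r ∈ Rset i, ((p r x : ℤ) : ℝ))
        ≤ (fsupp (fun x => ∑ i ∈ Finset.range (n + 1),
            (if c i then (1:ℝ) else 0) * ∏ r ∈ Rset i, ((p r x : ℤ) : ℝ))).card :=
          sparsity_le_card_fsupp _
      _ ≤ ((Finset.range (n + 1)).biUnion fun i =>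
            fsupp (fun x => (if c i then (1:ℝ) else 0) * ∏ r ∈ Rset i, ((p r x : ℤ) : ℝ))).card :=
          Finset.card_le_card (fsupp_sum _ _)
      _ ≤ ∑ i ∈ Finset.range (n + 1),
            (fsupp (fun x => (if c i then (1:ℝ) else 0) * ∏ r ∈ Rset i, ((p r x : ℤ) : ℝ))).card :=
          Finset.card_biUnion_le
      _ ≤ ∑ i ∈ Finset.range (n + 1),
            (if c i then 1 else 0) * ∏ r ∈ Rset i, (s r + 1) := by
          refine Finset.sum_le_sum fun i hi => ?_
          rcases Bool.eq_false_or_eq_true (c i) with hci | hci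
          · have heq : (fun x => (if c i then (1:ℝ) else 0) * ∏ r ∈ Rset i, ((p r x : ℤ) : ℝ))
                = fun x => ∏ r ∈ Rset i, ((p r x : ℤ) : ℝ) := by
              funext x; simp [hci]
            rw [heq, if_pos hci, one_mul]
            refine le_trans (fsupp_prod _ _) ?_
            refine Finset.prod_le_prod' fun r hr => ?_
            have h2r := hle i hi r hr
            calc (fsupp (fun x => ((p r x : ℤ) : ℝ))).card
                ≤ sparsity (fun x => ((p r x : ℤ) : ℝ)) + 1 := card_fsupp_le _
              _ = s r + 1 := by rw [hs r h2r]
          · have : (fun x => (if c i then (1:ℝ) else 0) * ∏ r ∈ Rset i, ((p r x : ℤ) : ℝ))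
                = fun _ : Fin n → Bool => (0:ℝ) := by
              funext x; simp [hci]
            rw [this, fsupp_const_zero, Finset.card_empty]
            exact Nat.zero_le _
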